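/- Let X = (X_1,...,X_n) be i.u.d. and let 𝒴 be a random variable with values in the state space Σ = Δ_n × S_n, where Δ_n = {(a_1,...,a_n) : 1 ≥ a_1 ≥ ... ≥ a_n ≥ 0}. Then Y := proj_Y(𝒴), where proj_Y(a,s) = a^s, is (in distribution) a rearrangement of the descending arrangement X↓ if and only if for every Lebesgue-measurable set A ⊂ Δ_n, P(𝒴 ∈ A × S_n) = n! · Leb_n(A). -/

import Mathlib

open MeasureTheory

/-- A law `ν` on `ℝ^n` is a *rearrangement* of a law `lam` on `ℝ^n`. -/
def IsRearrangement (n : ℕ) (lam nu : Measure (Fin n → ℝ)) : Prop :=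
  ∃ (Ω : Type) (_ : MeasurableSpace Ω) (P : Measure Ω),
    IsProbabilityMeasure P ∧
    ∃ (X : Ω → Fin n → ℝ) (σ : Ω → Equiv.Perm (Fin n)),
      Measurable X ∧ (∀ s : Equiv.Perm (Fin n), MeasurableSet {ω | σ ω = s}) ∧
      P.map X = lam ∧ P.map (fun ω i => X ω (σ ω i)) = nu

/-- The ascending arrangement of a tuple. -/
noncomputable def ascArr (n : ℕ) (a : Fin n → ℝ) : Fin n → ℝ := a ∘ Tuple.sort a

/-- The descending arrangement of a tuple: its entries listed in decreasing order. -/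
noncomputable def descArr (n : ℕ) (a : Fin n → ℝ) : Fin n → ℝ := fun i => ascArr n a i.rev

/-- `X = (X_1,...,X_n)` is i.u.d.: the coordinates are independent and each is uniformly
distributed on `[0,1]`. -/
def IsIUD {Ω : Type} [MeasurableSpace Ω] (P : Measure Ω) {n : ℕ}
    (X : Ω → Fin n → ℝ) : Prop :=
  (∀ i, Measurable fun ω => X ω i) ∧
  ProbabilityTheory.iIndepFun (fun i ω => X ω i) P ∧
  ∀ i, P.map (fun ω => X ω i) = volume.restrict (Set.Icc (0:ℝ) 1)

/-- `Δ_n`, the simplex of descending `n`-tuples in `[0,1]^n`. -/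
def simplexSet (n : ℕ) : Set (Fin n → ℝ) :=
  {a | (∀ i, a i ∈ Set.Icc (0:ℝ) 1) ∧ ∀ i j : Fin n, i ≤ j → a j ≤ a i}

/-! The descending arrangement `↓` is invariant under permutations of the coordinates and fixes
every point of `Δ_n`. Hence a rearrangement `Y` of `X↓` satisfies `Y↓ ~ X↓`, and for
`Y = proj_Y(𝒴)` one has `Y↓ = 𝒴.1` almost surely; conversely `(𝒴.1, 𝒴.2)` itself witnesses the
rearrangement once `𝒴.1 ~ X↓`. So everything reduces to the law of `X↓`, which is `n! ⋅ Leb` on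
`Δ_n`: `X` is uniform on the cube, and `↓⁻¹ A` is the union of the `n!` permuted copies of `A`,
each of volume `Leb A` and pairwise intersecting only in the null set of tuples with a repeated
entry. -/

section Measurability

variable {Ω ι β : Type*} [MeasurableSpace Ω] [Finite ι] [MeasurableSpace β]

lemma measurable_comp_perm {g : Ω → ι → β} {σ : Ω → Equiv.Perm ι} (hg : Measurable g)
    (hσ : ∀ s, MeasurableSet {ω | σ ω = s}) : Measurable fun ω i => g ω (σ ω i) := by
  intro S hS
  have hpre : (fun ω i => g ω (σ ω i)) ⁻¹' S =
      ⋃ s, {ω | σ ω = s} ∩ (fun ω i => g ω (s i)) ⁻¹' S := by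
    ext ω; simp
  rw [hpre]
  exact .iUnion fun s =>
    (hσ s).inter (measurable_pi_lambda _ (fun i => (measurable_pi_apply (s i)).comp hg) hS)

end Measurability

section

variable {n : ℕ}

lemma measurableSet_sort_eq (s : Equiv.Perm (Fin n)) :
    MeasurableSet {a : Fin n → ℝ | Tuple.sort a = s} := by
  simp_rw [eq_comm (a := Tuple.sort _), Tuple.eq_sort_iff, Monotone]
  refine Measurable.setOf ?_
  fun_prop

lemma measurable_ascArr : Measurable (ascArr n) :=
  measurable_comp_perm measurable_id measurableSet_sort_eq

lemma measurable_descArr : Measurable (descArr n) :=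
  measurable_pi_lambda _ fun i => (measurable_pi_apply i.rev).comp measurable_ascArr

lemma descArr_eq_comp_perm (a : Fin n → ℝ) :
    descArr n a = a ∘ (Fin.revPerm.trans (Tuple.sort a)) := rfl

lemma descArr_comp_perm (a : Fin n → ℝ) (s : Equiv.Perm (Fin n)) :
    descArr n (a ∘ s) = descArr n a := by
  unfold descArr ascArr
  rw [Tuple.comp_perm_comp_sort_eq_comp_sort]

lemma antitone_descArr (a : Fin n → ℝ) : Antitone (descArr n a) :=
  fun _ _ hij => Tuple.monotone_sort a (Fin.rev_le_rev.mpr hij)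

lemma descArr_of_antitone {a : Fin n → ℝ} (ha : Antitone a) : descArr n a = a := by
  have hsort : Tuple.sort (a ∘ Fin.revPerm) = Equiv.refl _ :=
    Tuple.sort_eq_refl_iff_monotone.mpr fun _ _ hij => ha (Fin.rev_le_rev.mpr hij)
  rw [← descArr_comp_perm a Fin.revPerm]
  funext i
  simp [descArr, ascArr, hsort]

lemma descArr_descArr (a : Fin n → ℝ) : descArr n (descArr n a) = descArr n a :=
  descArr_of_antitone (antitone_descArr a)

lemma descArr_mem_simplexSet_iff {a : Fin n → ℝ} :
    descArr n a ∈ simplexSet n ↔ a ∈ Set.univ.pi fun _ => Set.Icc (0 : ℝ) 1 := by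
  simp only [simplexSet, Set.mem_ofPred_eq, descArr_eq_comp_perm, Function.comp_apply,
    Equiv.forall_congr_right (q := fun i => a i ∈ Set.Icc (0 : ℝ) 1), Set.mem_univ_pi,
    and_iff_left_iff_imp]
  exact fun _ _ _ hij => antitone_descArr a hij

lemma measurableSet_simplexSet : MeasurableSet (simplexSet n) := by
  refine Measurable.setOf ?_
  simp only [Set.mem_Icc]
  fun_prop

section Lebesgue

variable {ι : Type*} [Fintype ι]

lemma volume_preimage_comp_perm (s : Equiv.Perm ι) (A : Set (ι → ℝ)) :
    volume ((fun a : ι → ℝ => a ∘ s) ⁻¹' A) = volume A :=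
  (volume_preserving_arrowCongr' s.symm (MeasurableEquiv.refl ℝ)
    (MeasurePreserving.id volume)).measure_preimage_equiv A

lemma volume_eq_coord_eq_zero [DecidableEq ι] {p q : ι} (hpq : p ≠ q) :
    volume {a : ι → ℝ | a p = a q} = 0 := by
  set f : (ι → ℝ) →ₗ[ℝ] ℝ := LinearMap.proj (R := ℝ) (φ := fun _ => ℝ) p - LinearMap.proj q
  have hf : f ≠ 0 := fun h => by
    simpa [f, Pi.single_eq_of_ne' hpq] using LinearMap.congr_fun h (Pi.single p 1)
  have hker : {a : ι → ℝ | a p = a q} = LinearMap.ker f := by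
    ext a; simp [f, sub_eq_zero]
  rw [hker]
  exact Measure.addHaar_submodule _ _ (mt LinearMap.ker_eq_top.mp hf)

lemma volume_not_injective_eq_zero : volume {a : ι → ℝ | ¬ Function.Injective a} = 0 := by
  classical
  have hsub : {a : ι → ℝ | ¬ Function.Injective a} ⊆
      ⋃ (p) (q) (_ : p ≠ q), {a : ι → ℝ | a p = a q} := by
    intro a ha
    obtain ⟨p, q, hpq, hne⟩ := Function.not_injective_iff.mp ha
    simpa using ⟨p, q, hne, hpq⟩
  exact measure_mono_null hsub <| measure_iUnion_null fun p => measure_iUnion_null fun q =>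
    measure_iUnion_null volume_eq_coord_eq_zero

end Lebesgue

lemma preimage_descArr_eq_iUnion {A : Set (Fin n → ℝ)} (hA : ∀ a ∈ A, Antitone a) :
    descArr n ⁻¹' A = ⋃ s : Equiv.Perm (Fin n), (fun a => a ∘ s) ⁻¹' A := by
  ext a
  simp only [Set.mem_preimage, Set.mem_iUnion]
  refine ⟨fun h => ⟨_, (descArr_eq_comp_perm a).symm ▸ h⟩, fun ⟨s, hs⟩ => ?_⟩
  rwa [← descArr_comp_perm a s, descArr_of_antitone (hA _ hs)]

lemma pairwise_aedisjoint_preimage_comp_perm {A : Set (Fin n → ℝ)} (hA : ∀ a ∈ A, Antitone a) :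
    Pairwise (Function.onFun (AEDisjoint volume)
      fun s : Equiv.Perm (Fin n) => (fun a => a ∘ s) ⁻¹' A) := by
  intro s t hst
  refine measure_mono_null ?_ volume_not_injective_eq_zero
  rintro a ⟨has : a ∘ s ∈ A, hat : a ∘ t ∈ A⟩ (hinj : Function.Injective a)
  refine hst (Equiv.ext fun i => hinj (congrFun (?_ : a ∘ s = a ∘ t) i))
  rw [← descArr_of_antitone (hA _ has), ← descArr_of_antitone (hA _ hat),
    descArr_comp_perm, descArr_comp_perm]

lemma volume_preimage_descArr {A : Set (Fin n → ℝ)} (hA : ∀ a ∈ A, Antitone a)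
    (hAm : MeasurableSet A) : volume (descArr n ⁻¹' A) = n.factorial * volume A := by
  have hmeas (s : Equiv.Perm (Fin n)) : MeasurableSet ((fun a => a ∘ s) ⁻¹' A) :=
    (measurable_pi_lambda _ fun i => measurable_pi_apply (s i)) hAm
  rw [preimage_descArr_eq_iUnion hA, measure_iUnion₀ (pairwise_aedisjoint_preimage_comp_perm hA)
    fun s => (hmeas s).nullMeasurableSet]
  simp [volume_preimage_comp_perm, Fintype.card_perm]

lemma map_descArr_volume_restrict_cube :
    (volume.restrict (Set.univ.pi fun _ => Set.Icc (0 : ℝ) 1)).map (descArr n) =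
      (n.factorial : ENNReal) • volume.restrict (simplexSet n) := by
  ext E hE
  have hpre : descArr n ⁻¹' E ∩ Set.univ.pi (fun _ => Set.Icc (0 : ℝ) 1) =
      descArr n ⁻¹' (E ∩ simplexSet n) := by
    ext a; simp only [Set.mem_inter_iff, Set.mem_preimage, descArr_mem_simplexSet_iff]
  rw [Measure.map_apply measurable_descArr hE, Measure.restrict_apply (measurable_descArr hE),
    hpre, volume_preimage_descArr (fun a ha => ha.2.2) (hE.inter measurableSet_simplexSet),
    Measure.smul_apply, Measure.restrict_apply hE, smul_eq_mul]

lemma IsIUD.map_eq_volume_restrict_cube {Ω : Type} [MeasurableSpace Ω] {P : Measure Ω}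
    {X : Ω → Fin n → ℝ} (hX : IsIUD P X) :
    P.map X = volume.restrict (Set.univ.pi fun _ => Set.Icc (0 : ℝ) 1) := by
  rw [volume_pi, Measure.restrict_pi_pi, ← funext hX.2.2]
  exact hX.2.1.map_fun_eq_pi_map fun i => (hX.1 i).aemeasurable

lemma IsIUD.map_descArr {Ω : Type} [MeasurableSpace Ω] {P : Measure Ω} {X : Ω → Fin n → ℝ}
    (hX : IsIUD P X) :
    P.map (fun ω => descArr n (X ω)) =
      (n.factorial : ENNReal) • volume.restrict (simplexSet n) := by
  rw [← map_descArr_volume_restrict_cube, ← hX.map_eq_volume_restrict_cube]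
  exact (Measure.map_map measurable_descArr (measurable_pi_lambda _ hX.1)).symm

lemma IsRearrangement.map_descArr {lam nu : Measure (Fin n → ℝ)} (h : IsRearrangement n lam nu) :
    nu.map (descArr n) = lam.map (descArr n) := by
  obtain ⟨Ω, _, P, -, X, σ, hX, hσ, rfl, rfl⟩ := h
  rw [Measure.map_map measurable_descArr (measurable_comp_perm hX hσ),
    Measure.map_map measurable_descArr hX]
  congr 1
  funext ω
  exact descArr_comp_perm (X ω) (σ ω)

end

theorem state_space_rearrangement_general {n : ℕ}
    {Ω₁ : Type} [MeasurableSpace Ω₁] (P₁ : Measure Ω₁)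
    (X : Ω₁ → Fin n → ℝ) (hX : IsIUD P₁ X)
    {Ω₂ : Type} [MeasurableSpace Ω₂] (P₂ : Measure Ω₂) [IsProbabilityMeasure P₂]
    (𝒴 : Ω₂ → (Fin n → ℝ) × Equiv.Perm (Fin n))
    (h𝒴₁ : Measurable fun ω => (𝒴 ω).1)
    (h𝒴₂ : ∀ s : Equiv.Perm (Fin n), MeasurableSet {ω | (𝒴 ω).2 = s})
    (hval : ∀ᵐ ω ∂P₂, (𝒴 ω).1 ∈ simplexSet n) :
    IsRearrangement n (P₁.map (fun ω => descArr n (X ω)))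
        (P₂.map (fun ω i => (𝒴 ω).1 ((𝒴 ω).2 i)))
      ↔ ∀ A : Set (Fin n → ℝ), A ⊆ simplexSet n → MeasurableSet A →
          P₂ {ω | (𝒴 ω).1 ∈ A} = (n.factorial : ENNReal) * volume A := by
  have hsorted : (P₁.map fun ω => descArr n (X ω)).map (descArr n) =
      P₁.map fun ω => descArr n (X ω) := by
    have hXd : Measurable fun ω => descArr n (X ω) :=
      measurable_descArr.comp (measurable_pi_lambda _ hX.1)
    rw [Measure.map_map measurable_descArr hXd]
    congr 1
    funext ω
    exact descArr_descArr (X ω)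
  have hproj : (P₂.map fun ω i => (𝒴 ω).1 ((𝒴 ω).2 i)).map (descArr n) =
      P₂.map fun ω => (𝒴 ω).1 := by
    rw [Measure.map_map measurable_descArr (measurable_comp_perm h𝒴₁ h𝒴₂)]
    refine Measure.map_congr (hval.mono fun ω hω => ?_)
    exact (descArr_comp_perm _ _).trans (descArr_of_antitone fun i j hij => hω.2 i j hij)
  have hconc : (P₂.map fun ω => (𝒴 ω).1).restrict (simplexSet n) = P₂.map fun ω => (𝒴 ω).1 :=
    Measure.restrict_eq_self_of_ae_mem
      ((ae_map_iff h𝒴₁.aemeasurable measurableSet_simplexSet).mpr hval)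
  calc _ ↔ P₂.map (fun ω => (𝒴 ω).1) = P₁.map (fun ω => descArr n (X ω)) :=
        ⟨fun h => by rw [← hproj, h.map_descArr, hsorted],
          fun h => ⟨Ω₂, _, P₂, inferInstance, _, _, h𝒴₁, h𝒴₂, h, rfl⟩⟩
    _ ↔ _ := by
        rw [hX.map_descArr, ← hconc, ← Measure.restrict_smul,
          Measure.restrict_congr_meas measurableSet_simplexSet]
        refine forall₂_congr fun A _ => imp_congr_right fun hA => ?_
        rw [Measure.map_apply h𝒴₁ hA, Measure.smul_apply, smul_eq_mul]
        rfl

/-- Let `X` be i.u.d. and let `𝒴` be a random variable with values in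
`Σ = Δ_n × S_n`.  Then `Y := proj_Y(𝒴)`, where `proj_Y(a,s) = a^s`, is (in distribution)
a rearrangement of the descending arrangement `X↓` if and only if for every measurable
`A ⊆ Δ_n`, `P(𝒴 ∈ A × S_n) = n! ⋅ Leb_n(A)`. -/
theorem state_space_rearrangement {n : ℕ}
    {Ω₁ : Type} [MeasurableSpace Ω₁] (P₁ : Measure Ω₁) [IsProbabilityMeasure P₁]
    (X : Ω₁ → Fin n → ℝ) (hX : IsIUD P₁ X)
    {Ω₂ : Type} [MeasurableSpace Ω₂] (P₂ : Measure Ω₂) [IsProbabilityMeasure P₂]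
    (𝒴 : Ω₂ → (Fin n → ℝ) × Equiv.Perm (Fin n))
    (h𝒴₁ : Measurable fun ω => (𝒴 ω).1)
    (h𝒴₂ : ∀ s : Equiv.Perm (Fin n), MeasurableSet {ω | (𝒴 ω).2 = s})
    (hval : ∀ᵐ ω ∂P₂, (𝒴 ω).1 ∈ simplexSet n) :
    IsRearrangement n (P₁.map (fun ω => descArr n (X ω)))
        (P₂.map (fun ω i => (𝒴 ω).1 ((𝒴 ω).2 i)))
      ↔ ∀ A : Set (Fin n → ℝ), A ⊆ simplexSet n → MeasurableSet A →
          P₂ {ω | (𝒴 ω).1 ∈ A} = (n.factorial : ENNReal) * volume A :=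
  state_space_rearrangement_general P₁ X hX P₂ 𝒴 h𝒴₁ h𝒴₂ hval
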